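/- arXiv:2407.09830 — 3 statements merged into one kernel-verified Lean document; each statement's English description precedes it below -/
import Mathlib

section
/- Let b>0, n∈ℕ₀, α≥0, and f∈C_α^n([b,∞)). Then for every c≥b the restriction f|_{[c,∞)} belongs to C_α^n([c,∞)) and ‖f|_{[c,∞)}‖_{C_α^n([c,∞))} ≤ (n+1)·‖f‖_{C_α^n([b,∞))}. -/
/-!
Write `K` for the norm of `f` on `[b,∞)`. Downward induction on `k` gives
`‖f⁽ᵏ⁾(t)‖ ≤ K t^(n-k+α)` for all `t ≥ b` and `k ≤ n`: for `k = n` this is the supremum term of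
the norm, and for `k < n` the mean value inequality on `[b,t]` gives
`‖f⁽ᵏ⁾(t)‖ ≤ ‖f⁽ᵏ⁾(b)‖ + K t^(n-k-1+α) (t - b) ≤ K b^(n-k+α) + K t^(n-k-1+α) (t - b) ≤ K t^(n-k+α)`,
where `α ≥ 0` makes `x ↦ x^(n-k-1+α)` monotone. On `[c,∞)` each of the `n + 1` terms of the
norm is therefore at most `K`.
-/

open Set Filter MeasureTheory Topology

noncomputable section

/-- Membership in the space `C_α^n([b,∞))`: `f` is `n`-times continuously differentiable
on `[b,∞)` and its `n`-th derivative satisfies a polynomial bound `M·y^α`. -/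
def MemCnAlpha (b : ℝ) (n : ℕ) (α : ℝ) (f : ℝ → ℂ) : Prop :=
  ContDiffOn ℝ n f (Set.Ici b) ∧
    ∃ M : ℝ, 0 ≤ M ∧ ∀ y ∈ Set.Ici b, ‖iteratedDerivWithin n f (Set.Ici b) y‖ ≤ M * y ^ α

/-- The norm on the space `C_α^n([b,∞))`. -/
def CnAlphaNorm (b : ℝ) (n : ℕ) (α : ℝ) (f : ℝ → ℂ) : ℝ :=
  (∑ k ∈ Finset.range n, ‖iteratedDerivWithin k f (Set.Ici b) b‖ / b ^ ((n : ℝ) - k + α)) +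
    ⨆ y : Set.Ici b, ‖iteratedDerivWithin n f (Set.Ici b) y‖ / (y : ℝ) ^ α

lemma iteratedDerivWithin_subset {𝕜 F : Type*} [NontriviallyNormedField 𝕜]
    [NormedAddCommGroup F] [NormedSpace 𝕜 F] {f : 𝕜 → F} {s t : Set 𝕜} {n : ℕ} {x : 𝕜}
    (st : s ⊆ t) (hs : UniqueDiffOn 𝕜 s) (ht : UniqueDiffOn 𝕜 t) (h : ContDiffOn 𝕜 n f t)
    (hx : x ∈ s) : iteratedDerivWithin n f s x = iteratedDerivWithin n f t x := by
  simp only [iteratedDerivWithin_eq_iteratedFDerivWithin, iteratedFDerivWithin_subset st hs ht h hx]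

lemma iteratedDerivWithin_Ici_of_le {F : Type*} [NormedAddCommGroup F] [NormedSpace ℝ F]
    {f : ℝ → F} {n m : ℕ} {b c y : ℝ} (hf : ContDiffOn ℝ n f (Ici b)) (hm : m ≤ n)
    (hc : b ≤ c) (hy : y ∈ Ici c) :
    iteratedDerivWithin m f (Ici c) y = iteratedDerivWithin m f (Ici b) y :=
  iteratedDerivWithin_subset (Ici_subset_Ici.mpr hc) (uniqueDiffOn_Ici c) (uniqueDiffOn_Ici b)
    (hf.of_le (by exact_mod_cast hm)) hy

lemma norm_le_mul_rpow_add_one_of_derivWithin {E : Type*} [NormedAddCommGroup E]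
    [NormedSpace ℝ E] {g : ℝ → E} {b K β t : ℝ} (hb : 0 ≤ b) (hK : 0 ≤ K) (hβ : 0 ≤ β)
    (hg : DifferentiableOn ℝ g (Ici b))
    (hg' : ∀ x ∈ Ici b, ‖derivWithin g (Ici b) x‖ ≤ K * x ^ β)
    (hgb : ‖g b‖ ≤ K * b ^ (β + 1)) (ht : b ≤ t) :
    ‖g t‖ ≤ K * t ^ (β + 1) := by
  have hmvt : ‖g t - g b‖ ≤ K * t ^ β * ‖t - b‖ :=
    (convex_Icc b t).norm_image_sub_le_of_norm_hasDerivWithin_le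
      (fun x hx => ((hg x hx.1).hasDerivWithinAt).mono Icc_subset_Ici_self)
      (fun x hx => (hg' x hx.1).trans
        (mul_le_mul_of_nonneg_left (Real.rpow_le_rpow (hb.trans hx.1) hx.2 hβ) hK))
      (left_mem_Icc.mpr ht) (right_mem_Icc.mpr ht)
  rw [Real.norm_of_nonneg (sub_nonneg.mpr ht)] at hmvt
  have hpow : b ^ β ≤ t ^ β := Real.rpow_le_rpow hb ht hβ
  have hβ1 : β + 1 ≠ 0 := by linarith
  rw [Real.rpow_add_one' hb hβ1] at hgb
  rw [Real.rpow_add_one' (hb.trans ht) hβ1]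
  calc ‖g t‖ ≤ ‖g b‖ + ‖g t - g b‖ := norm_le_norm_add_norm_sub' (g t) (g b)
    _ ≤ K * (b ^ β * b) + K * t ^ β * (t - b) := add_le_add hgb hmvt
    _ ≤ K * (t ^ β * t) := by nlinarith [mul_le_mul_of_nonneg_left hpow hK]

section CnAlpha

variable {b c : ℝ} {n : ℕ} {α : ℝ} {f : ℝ → ℂ}

lemma MemCnAlpha.mono (hf : MemCnAlpha b n α f) (hc : b ≤ c) : MemCnAlpha c n α f := by
  obtain ⟨hcd, M, hM, hMb⟩ := hf
  refine ⟨hcd.mono (Ici_subset_Ici.mpr hc), M, hM, fun y hy => ?_⟩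
  rw [iteratedDerivWithin_Ici_of_le hcd le_rfl hc hy]
  exact hMb y (hc.trans hy)

lemma MemCnAlpha.bddAbove_range (hb : 0 < b) (hf : MemCnAlpha b n α f) :
    BddAbove (range fun y : Ici b => ‖iteratedDerivWithin n f (Ici b) y‖ / (y : ℝ) ^ α) := by
  obtain ⟨M, -, hMb⟩ := hf.2
  refine ⟨M, ?_⟩
  rintro _ ⟨y, rfl⟩
  exact (div_le_iff₀ (Real.rpow_pos_of_pos (hb.trans_le y.2) α)).mpr (hMb y y.2)

lemma CnAlphaNorm_sum_nonneg (hb : 0 < b) :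
    0 ≤ ∑ k ∈ Finset.range n, ‖iteratedDerivWithin k f (Ici b) b‖ / b ^ ((n : ℝ) - k + α) :=
  Finset.sum_nonneg fun _ _ => by positivity

lemma CnAlphaNorm_iSup_nonneg (hb : 0 < b) :
    0 ≤ ⨆ y : Ici b, ‖iteratedDerivWithin n f (Ici b) y‖ / (y : ℝ) ^ α :=
  Real.iSup_nonneg fun y =>
    div_nonneg (norm_nonneg _) (Real.rpow_nonneg (hb.le.trans y.2) α)

lemma CnAlphaNorm_nonneg (hb : 0 < b) : 0 ≤ CnAlphaNorm b n α f :=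
  add_nonneg (CnAlphaNorm_sum_nonneg hb) (CnAlphaNorm_iSup_nonneg hb)

lemma norm_iteratedDerivWithin_self_le_CnAlphaNorm (hb : 0 < b) {k : ℕ} (hk : k < n) :
    ‖iteratedDerivWithin k f (Ici b) b‖ ≤ CnAlphaNorm b n α f * b ^ ((n : ℝ) - k + α) := by
  rw [← div_le_iff₀ (Real.rpow_pos_of_pos hb _)]
  calc _ ≤ ∑ i ∈ Finset.range n, ‖iteratedDerivWithin i f (Ici b) b‖ / b ^ ((n : ℝ) - i + α) :=
        Finset.single_le_sum (fun _ _ => by positivity) (Finset.mem_range.mpr hk)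
    _ ≤ CnAlphaNorm b n α f := le_add_of_nonneg_right (CnAlphaNorm_iSup_nonneg hb)

lemma MemCnAlpha.norm_iteratedDerivWithin_top_le (hb : 0 < b) (hf : MemCnAlpha b n α f)
    {y : ℝ} (hy : b ≤ y) :
    ‖iteratedDerivWithin n f (Ici b) y‖ ≤ CnAlphaNorm b n α f * y ^ α := by
  rw [← div_le_iff₀ (Real.rpow_pos_of_pos (hb.trans_le hy) _)]
  calc _ ≤ ⨆ y : Ici b, ‖iteratedDerivWithin n f (Ici b) y‖ / (y : ℝ) ^ α :=
        le_ciSup (hf.bddAbove_range hb) ⟨y, hy⟩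
    _ ≤ CnAlphaNorm b n α f := le_add_of_nonneg_left (CnAlphaNorm_sum_nonneg hb)

lemma MemCnAlpha.norm_iteratedDerivWithin_le (hb : 0 < b) (hα : 0 ≤ α)
    (hf : MemCnAlpha b n α f) {k : ℕ} (hk : k ≤ n) {t : ℝ} (ht : b ≤ t) :
    ‖iteratedDerivWithin k f (Ici b) t‖ ≤ CnAlphaNorm b n α f * t ^ ((n : ℝ) - k + α) := by
  induction hk using Nat.decreasingInduction generalizing t with
  | self => simpa using hf.norm_iteratedDerivWithin_top_le hb ht
  | of_succ k hk ih =>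
    have hβ : 0 ≤ (n : ℝ) - (k + 1 : ℕ) + α := by
      have : ((k + 1 : ℕ) : ℝ) ≤ n := by exact_mod_cast hk
      linarith
    have hexp : (n : ℝ) - k + α = (n : ℝ) - (k + 1 : ℕ) + α + 1 := by push_cast; ring
    rw [hexp]
    refine norm_le_mul_rpow_add_one_of_derivWithin hb.le (CnAlphaNorm_nonneg hb) hβ
      (hf.1.differentiableOn_iteratedDerivWithin (by exact_mod_cast hk) (uniqueDiffOn_Ici b))
      (fun x hx => ?_) ?_ ht
    · rw [← iteratedDerivWithin_succ]
      exact ih hx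
    · rw [← hexp]
      exact norm_iteratedDerivWithin_self_le_CnAlphaNorm hb hk

lemma CnAlphaNorm_le_of_forall_norm_le (hb : 0 < b) {K : ℝ}
    (h : ∀ k ≤ n, ∀ y ∈ Ici b,
      ‖iteratedDerivWithin k f (Ici b) y‖ ≤ K * y ^ ((n : ℝ) - k + α)) :
    CnAlphaNorm b n α f ≤ ((n : ℝ) + 1) * K := by
  have hsum : ∑ k ∈ Finset.range n, ‖iteratedDerivWithin k f (Ici b) b‖ / b ^ ((n : ℝ) - k + α)
      ≤ n * K := by
    calc _ ≤ ∑ _k ∈ Finset.range n, K := Finset.sum_le_sum fun k hk =>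
          (div_le_iff₀ (Real.rpow_pos_of_pos hb _)).mpr
            (h k (Finset.mem_range.mp hk).le b self_mem_Ici)
      _ = n * K := by simp
  have hsup : ⨆ y : Ici b, ‖iteratedDerivWithin n f (Ici b) y‖ / (y : ℝ) ^ α ≤ K := by
    have : Nonempty (Ici b) := ⟨⟨b, self_mem_Ici⟩⟩
    refine ciSup_le fun y => (div_le_iff₀ (Real.rpow_pos_of_pos (hb.trans_le y.2) _)).mpr ?_
    simpa using h n le_rfl y y.2
  unfold CnAlphaNorm
  linarith

end CnAlpha

/-- restriction to `[c,∞)` for `c ≥ b` stays in the space, with norm bound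
`‖f|_{[c,∞)}‖ ≤ (n+1)·‖f‖`. -/
theorem stmt1 (b : ℝ) (hb : 0 < b) (n : ℕ) (α : ℝ) (hα : 0 ≤ α) (f : ℝ → ℂ)
    (hf : MemCnAlpha b n α f) (c : ℝ) (hc : b ≤ c) :
    MemCnAlpha c n α f ∧
      CnAlphaNorm c n α f ≤ ((n : ℝ) + 1) * CnAlphaNorm b n α f := by
  refine ⟨hf.mono hc, CnAlphaNorm_le_of_forall_norm_le (hb.trans_le hc) fun k hk y hy => ?_⟩
  rw [iteratedDerivWithin_Ici_of_le hf.1 hk hc hy]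
  exact hf.norm_iteratedDerivWithin_le hb hα hk (hc.trans hy)
end
end

section
/- Let a∈ℝ\{0}, b>0, ε>0, y₀∈ℝ, and set y_ε := y + εy₀/(ia−ε) and b_ε := b + εy₀/(ia−ε). Then for every f∈C_α^1([b,∞)) with α≥0 and every κ∈ℕ₀ one has the integration-by-parts identity I_{a,b}^{ε,y₀}(f/y_ε^κ) = (−1/(2(ia−ε))) · ( e^{iab²−ε(b−y₀)²} f(b)/b_ε^{κ+1} − (κ+1)·I_{a,b}^{ε,y₀}(f/y_ε^{κ+2}) + I_{a,b}^{ε,y₀}(f'/y_ε^{κ+1}) ), where all integrals are absolutely convergent Lebesgue integrals. -/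
open Set Filter MeasureTheory Topology

noncomputable section

/-- The regularized integral `I_{a,b}^{ε,y₀}(g) = ∫_b^∞ e^{-ε(y-y₀)²} e^{iay²} g(y) dy`. -/
def Iab (a b ε y₀ : ℝ) (g : ℝ → ℂ) : ℂ :=
  ∫ y in Set.Ioi b,
    Complex.exp (-(ε : ℂ) * (y - y₀) ^ 2) * Complex.exp (Complex.I * a * y ^ 2) * g y

/-!
Write `c = ia - ε` and `y_ε = y + εy₀/c`. The phase `φ(y) = -ε(y - y₀)² + iay²` of the kernel
satisfies `φ'(y) = 2c·y_ε`, so `e^φ f / y_ε^κ = (2c)⁻¹ (e^φ)' f / y_ε^(κ+1)`, and the identity is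
integration by parts on `(b, ∞)`, i.e. the fundamental theorem of calculus applied to
`e^φ f / y_ε^(κ+1)`. Everything converges and the boundary term at `∞` vanishes because
`|e^φ| = e^(-ε(y - y₀)²)` is a Gaussian, `|f|` grows at most like `y^(α+1)` by the mean value
theorem, and `|y_ε|` is bounded below on `[b, ∞)`: `y_ε` is real and positive if `εy₀ = 0`, and
has the constant non-zero imaginary part `-εy₀a/|c|²` otherwise.
-/

lemma norm_div_pow_le {w z : ℂ} {B δ : ℝ} (hδ : 0 < δ) (hw : ‖w‖ ≤ B) (hz : δ ≤ ‖z‖) (j : ℕ) :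
    ‖w / z ^ j‖ ≤ B / δ ^ j := by
  rw [norm_div, norm_pow]
  exact div_le_div₀ ((norm_nonneg w).trans hw) hw (pow_pos hδ j) (pow_le_pow_left₀ hδ.le hz j)

lemma exists_norm_le_mul_rpow_add_one {f f' : ℝ → ℂ} {b α M : ℝ} (hb : 0 < b) (hα : 0 ≤ α)
    (hf : ∀ y ∈ Ici b, HasDerivWithinAt f (f' y) (Ici b) y)
    (hf' : ∀ y ∈ Ici b, ‖f' y‖ ≤ M * y ^ α) :
    ∃ K, ∀ y ∈ Ici b, ‖f y‖ ≤ K * y ^ (α + 1) := by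
  refine ⟨‖f b‖ / b ^ (α + 1) + M, fun y hy => ?_⟩
  have hy0 : 0 < y := hb.trans_le hy
  have hM : 0 ≤ M :=
    nonneg_of_mul_nonneg_left ((norm_nonneg _).trans (hf' b self_mem_Ici)) (by positivity)
  have hmvt : ‖f y - f b‖ ≤ M * y ^ α * (y - b) := by
    have := Convex.norm_image_sub_le_of_norm_hasDerivWithin_le
      (fun t ht => (hf t ht.1).mono Icc_subset_Ici_self)
      (fun t ht => (hf' t ht.1).trans (mul_le_mul_of_nonneg_left
        (Real.rpow_le_rpow (hb.le.trans ht.1) ht.2 hα) hM))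
      (convex_Icc b y) (left_mem_Icc.2 hy) (right_mem_Icc.2 hy)
    rwa [Real.norm_eq_abs, abs_of_nonneg (sub_nonneg.2 hy)] at this
  have hfb : ‖f b‖ ≤ ‖f b‖ / b ^ (α + 1) * y ^ (α + 1) := by
    rw [div_mul_eq_mul_div, le_div_iff₀ (by positivity)]
    gcongr
    exact hy
  calc ‖f y‖ ≤ ‖f b‖ + ‖f y - f b‖ := norm_le_norm_add_norm_sub' _ _
    _ ≤ ‖f b‖ / b ^ (α + 1) * y ^ (α + 1) + M * y ^ α * y := by
        gcongr
        exact hmvt.trans (mul_le_mul_of_nonneg_left (by linarith) (by positivity))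
    _ = _ := by rw [Real.rpow_add_one hy0.ne']; ring

lemma exp_neg_mul_sub_sq_le {ε : ℝ} (hε : 0 ≤ ε) (y₀ y : ℝ) :
    Real.exp (-(ε * (y - y₀) ^ 2)) ≤ Real.exp (ε * y₀ ^ 2) * Real.exp (-(ε / 2) * y ^ 2) := by
  rw [← Real.exp_add]
  exact Real.exp_le_exp.2 (by nlinarith [mul_nonneg hε (sq_nonneg (y - 2 * y₀))])

def gaussChirp (a ε y₀ y : ℝ) : ℂ :=
  Complex.exp (-(ε : ℂ) * (y - y₀) ^ 2) * Complex.exp (Complex.I * a * y ^ 2)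

/-- `(y : ℂ) + chirpShift a ε y₀` is the paper's `y_ε`. -/
def chirpShift (a ε y₀ : ℝ) : ℂ := ε * y₀ / (Complex.I * a - ε)

lemma norm_gaussChirp (a ε y₀ y : ℝ) :
    ‖gaussChirp a ε y₀ y‖ = Real.exp (-(ε * (y - y₀) ^ 2)) := by
  simp [gaussChirp, Complex.norm_exp, ← Complex.ofReal_pow, ← Complex.ofReal_sub]

lemma continuous_gaussChirp (a ε y₀ : ℝ) : Continuous (gaussChirp a ε y₀) := by
  unfold gaussChirp; fun_prop

lemma hasDerivAt_gaussChirp (a ε y₀ y : ℝ) :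
    HasDerivAt (gaussChirp a ε y₀)
      (2 * ((Complex.I * a - ε) * y + ε * y₀) * gaussChirp a ε y₀ y) y := by
  have hdecay := ((((hasDerivAt_id (y : ℂ)).sub_const (y₀ : ℂ)).pow 2).const_mul
    (-(ε : ℂ))).cexp.comp_ofReal
  have hchirp := (((hasDerivAt_id (y : ℂ)).pow 2).const_mul (Complex.I * a)).cexp.comp_ofReal
  refine (hdecay.mul hchirp).congr_deriv ?_
  simp only [gaussChirp, Pi.pow_apply, id]
  push_cast
  ring

lemma I_mul_ofReal_sub_ofReal_ne_zero {a : ℝ} (ha : a ≠ 0) (ε : ℝ) :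
    Complex.I * a - ε ≠ 0 :=
  fun h => ha (by simpa using congrArg Complex.im h)

lemma exists_pos_le_norm_ofReal_add_chirpShift {a b : ℝ} (ha : a ≠ 0) (hb : 0 < b) (ε y₀ : ℝ) :
    ∃ δ > 0, ∀ y ∈ Ici b, δ ≤ ‖(y : ℂ) + chirpShift a ε y₀‖ := by
  by_cases h : ε * y₀ = 0
  · have hzero : chirpShift a ε y₀ = 0 := by simp [chirpShift, ← Complex.ofReal_mul, h]
    refine ⟨b, hb, fun y hy => ?_⟩
    rw [hzero, add_zero, Complex.norm_real, Real.norm_eq_abs]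
    exact hy.trans (le_abs_self y)
  · have him : (chirpShift a ε y₀).im =
        -(ε * y₀ * a / Complex.normSq (Complex.I * a - ε)) := by
      simp [chirpShift, Complex.div_im]
    have him0 : (chirpShift a ε y₀).im ≠ 0 := by
      rw [him]
      exact neg_ne_zero.2 (div_ne_zero (mul_ne_zero h ha)
        (Complex.normSq_pos.2 (I_mul_ofReal_sub_ofReal_ne_zero ha ε)).ne')
    refine ⟨_, abs_pos.2 him0, fun y _ => ?_⟩
    simpa using Complex.abs_im_le_norm ((y : ℂ) + chirpShift a ε y₀)

section GaussChirp

variable {a ε y₀ : ℝ}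

lemma norm_gaussChirp_mul_le (hε : 0 ≤ ε) {g : ℝ → ℂ} {N s y : ℝ} (hg : ‖g y‖ ≤ N * y ^ s) :
    ‖gaussChirp a ε y₀ y * g y‖ ≤
      N * Real.exp (ε * y₀ ^ 2) * (y ^ s * Real.exp (-(ε / 2) * y ^ 2)) := by
  rw [norm_mul, norm_gaussChirp]
  calc _ ≤ Real.exp (ε * y₀ ^ 2) * Real.exp (-(ε / 2) * y ^ 2) * (N * y ^ s) :=
        mul_le_mul (exp_neg_mul_sub_sq_le hε y₀ y) hg (norm_nonneg _) (by positivity)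
    _ = _ := by ring

lemma tendsto_gaussChirp_mul (hε : 0 < ε) {g : ℝ → ℂ} {N s : ℝ}
    (hg : ∀ᶠ y in atTop, ‖g y‖ ≤ N * y ^ s) :
    Tendsto (fun y => gaussChirp a ε y₀ y * g y) atTop (𝓝 0) := by
  have hexp : Tendsto (fun y : ℝ => Real.exp (-(1 / 2) * y)) atTop (𝓝 0) := by
    simpa [Function.comp_def] using Real.tendsto_exp_neg_atTop_nhds_zero.comp
      (tendsto_id.const_mul_atTop (by norm_num : (0 : ℝ) < 1 / 2))
  have hdecay : Tendsto (fun y : ℝ => y ^ s * Real.exp (-(ε / 2) * y ^ 2)) atTop (𝓝 0) :=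
    (rpow_mul_exp_neg_mul_sq_isLittleO_exp_neg (half_pos hε) s).tendsto_zero_of_tendsto hexp
  refine squeeze_zero_norm' ?_ (by simpa using hdecay.const_mul (N * Real.exp (ε * y₀ ^ 2)))
  filter_upwards [hg] with y hy
  simpa using norm_gaussChirp_mul_le (a := a) (y₀ := y₀) hε.le hy

lemma integrableOn_gaussChirp_mul (hε : 0 < ε) {b N s : ℝ} (hb : 0 ≤ b) (hs : -1 < s)
    {g : ℝ → ℂ} (hgc : ContinuousOn g (Ioi b)) (hg : ∀ y ∈ Ioi b, ‖g y‖ ≤ N * y ^ s) :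
    IntegrableOn (fun y => gaussChirp a ε y₀ y * g y) (Ioi b) := by
  have hdom := ((integrableOn_rpow_mul_exp_neg_mul_sq (half_pos hε) hs).mono_set
    (Ioi_subset_Ioi hb)).const_mul (N * Real.exp (ε * y₀ ^ 2))
  refine hdom.mono' (((continuous_gaussChirp a ε y₀).continuousOn.mul
    hgc).aestronglyMeasurable measurableSet_Ioi) ?_
  filter_upwards [ae_restrict_mem measurableSet_Ioi] with y hy
    using norm_gaussChirp_mul_le hε.le (hg y hy)

lemma integrableOn_gaussChirp_mul_div_pow (hε : 0 < ε) {b N s δ : ℝ} (hb : 0 ≤ b) (hs : -1 < s)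
    (hδ : 0 < δ) {d : ℂ} (hd : ∀ y ∈ Ici b, δ ≤ ‖(y : ℂ) + d‖) {g : ℝ → ℂ}
    (hgc : ContinuousOn g (Ici b)) (hg : ∀ y ∈ Ici b, ‖g y‖ ≤ N * y ^ s) (j : ℕ) :
    IntegrableOn (fun y => gaussChirp a ε y₀ y * (g y / ((y : ℂ) + d) ^ j)) (Ioi b) := by
  refine integrableOn_gaussChirp_mul hε hb hs (N := N / δ ^ j)
    ((hgc.mono Ioi_subset_Ici_self).div (by fun_prop) fun y hy => ?_) fun y hy => ?_
  · exact pow_ne_zero j (norm_pos_iff.1 (hδ.trans_le (hd y (Ioi_subset_Ici_self hy))))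
  · rw [div_mul_eq_mul_div]
    exact norm_div_pow_le hδ (hg y (Ioi_subset_Ici_self hy)) (hd y (Ioi_subset_Ici_self hy)) j

lemma hasDerivAt_gaussChirp_mul_div_pow (ha : a ≠ 0) {f : ℝ → ℂ} {f' : ℂ} {y : ℝ}
    (hf : HasDerivAt f f' y) (hy : (y : ℂ) + chirpShift a ε y₀ ≠ 0) (n : ℕ) :
    HasDerivAt (fun t => gaussChirp a ε y₀ t * (f t / ((t : ℂ) + chirpShift a ε y₀) ^ (n + 1)))
      (2 * (Complex.I * a - ε) * (gaussChirp a ε y₀ y * (f y / ((y : ℂ) + chirpShift a ε y₀) ^ n))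
        + gaussChirp a ε y₀ y * (f' / ((y : ℂ) + chirpShift a ε y₀) ^ (n + 1))
        - (n + 1) * (gaussChirp a ε y₀ y * (f y / ((y : ℂ) + chirpShift a ε y₀) ^ (n + 2)))) y := by
  have hc := I_mul_ofReal_sub_ofReal_ne_zero ha ε
  have hpow := (((hasDerivAt_id (y : ℂ)).add_const (chirpShift a ε y₀)).pow (n + 1)).comp_ofReal
  refine ((hasDerivAt_gaussChirp a ε y₀ y).mul (hf.div hpow (pow_ne_zero _ hy))).congr_deriv ?_
  have hphase : 2 * ((Complex.I * a - ε) * y + ε * y₀) =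
      2 * (Complex.I * a - ε) * ((y : ℂ) + chirpShift a ε y₀) := by
    rw [chirpShift]; field_simp
  simp only [Pi.div_apply, Pi.pow_apply, id, hphase, Nat.add_sub_cancel, Nat.cast_add,
    Nat.cast_one, mul_one]
  generalize (y : ℂ) + chirpShift a ε y₀ = w at hy ⊢
  field_simp
  ring

lemma integral_gaussChirp_mul_div_pow_eq (ha : a ≠ 0) {b : ℝ} {f f' : ℝ → ℂ} (n : ℕ)
    (hf : ∀ y ∈ Ici b, HasDerivWithinAt f (f' y) (Ici b) y)
    (hd : ∀ y ∈ Ici b, (y : ℂ) + chirpShift a ε y₀ ≠ 0)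
    (hA : IntegrableOn
      (fun y => gaussChirp a ε y₀ y * (f y / ((y : ℂ) + chirpShift a ε y₀) ^ n)) (Ioi b))
    (hB : IntegrableOn
      (fun y => gaussChirp a ε y₀ y * (f' y / ((y : ℂ) + chirpShift a ε y₀) ^ (n + 1))) (Ioi b))
    (hC : IntegrableOn
      (fun y => gaussChirp a ε y₀ y * (f y / ((y : ℂ) + chirpShift a ε y₀) ^ (n + 2))) (Ioi b))
    (hlim : Tendsto (fun y => gaussChirp a ε y₀ y * (f y / ((y : ℂ) + chirpShift a ε y₀) ^ (n + 1)))
      atTop (𝓝 0)) :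
    ∫ y in Ioi b, gaussChirp a ε y₀ y * (f y / ((y : ℂ) + chirpShift a ε y₀) ^ n) =
      -1 / (2 * (Complex.I * a - ε)) *
        (gaussChirp a ε y₀ b * (f b / ((b : ℂ) + chirpShift a ε y₀) ^ (n + 1))
          - (n + 1) * (∫ y in Ioi b,
              gaussChirp a ε y₀ y * (f y / ((y : ℂ) + chirpShift a ε y₀) ^ (n + 2)))
          + ∫ y in Ioi b,
              gaussChirp a ε y₀ y * (f' y / ((y : ℂ) + chirpShift a ε y₀) ^ (n + 1))) := by
  have hc := I_mul_ofReal_sub_ofReal_ne_zero ha ε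
  have hcont : ContinuousWithinAt
      (fun t => gaussChirp a ε y₀ t * (f t / ((t : ℂ) + chirpShift a ε y₀) ^ (n + 1))) (Ici b) b :=
    (continuous_gaussChirp a ε y₀).continuousWithinAt.mul
      ((hf b self_mem_Ici).continuousWithinAt.div (by fun_prop) (pow_ne_zero _ (hd b self_mem_Ici)))
  have hderiv (y : ℝ) (hy : y ∈ Ioi b) := hasDerivAt_gaussChirp_mul_div_pow ha
    ((hf y (Ioi_subset_Ici_self hy)).hasDerivAt (Ici_mem_nhds hy)) (hd y (Ioi_subset_Ici_self hy)) n
  have hA' := hA.const_mul (2 * (Complex.I * a - ε))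
  have hC' := hC.const_mul ((n : ℂ) + 1)
  have hFTC := integral_Ioi_of_hasDerivAt_of_tendsto hcont hderiv ((hA'.add hB).sub hC') hlim
  rw [integral_sub ?hAB hC', integral_add hA' hB, integral_const_mul,
    integral_const_mul] at hFTC
  case hAB => exact hA'.add hB
  rw [div_mul_eq_mul_div, eq_div_iff (mul_ne_zero two_ne_zero hc)]
  linear_combination hFTC

end GaussChirp

/-- the integration by parts identity
`I_{a,b}^{ε,y₀}(f/y_ε^κ) = (-1/(2(ia-ε)))·(e^{iab²-ε(b-y₀)²} f(b)/b_ε^{κ+1}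
  - (κ+1)·I_{a,b}^{ε,y₀}(f/y_ε^{κ+2}) + I_{a,b}^{ε,y₀}(f'/y_ε^{κ+1}))`,
with all integrals absolutely convergent. -/
theorem stmt10 (a : ℝ) (ha : a ≠ 0) (b : ℝ) (hb : 0 < b) (ε : ℝ) (hε : 0 < ε) (y₀ : ℝ)
    (α : ℝ) (hα : 0 ≤ α) (f : ℝ → ℂ) (hf : MemCnAlpha b 1 α f) (κ : ℕ) :
    (∀ j ∈ ({κ, κ + 2} : Finset ℕ),
      MeasureTheory.IntegrableOn
        (fun y : ℝ => Complex.exp (-(ε : ℂ) * (y - y₀) ^ 2) * Complex.exp (Complex.I * a * y ^ 2) *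
          (f y / ((y : ℂ) + ε * y₀ / (Complex.I * a - ε)) ^ j)) (Set.Ioi b)) ∧
    MeasureTheory.IntegrableOn
      (fun y : ℝ => Complex.exp (-(ε : ℂ) * (y - y₀) ^ 2) * Complex.exp (Complex.I * a * y ^ 2) *
        (derivWithin f (Set.Ici b) y / ((y : ℂ) + ε * y₀ / (Complex.I * a - ε)) ^ (κ + 1)))
      (Set.Ioi b) ∧
    Iab a b ε y₀ (fun y => f y / ((y : ℂ) + ε * y₀ / (Complex.I * a - ε)) ^ κ) =
      -1 / (2 * (Complex.I * a - ε)) *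
        (Complex.exp (Complex.I * a * b ^ 2 - ε * ((b : ℂ) - y₀) ^ 2) * f b /
            ((b : ℂ) + ε * y₀ / (Complex.I * a - ε)) ^ (κ + 1)
          - ((κ : ℂ) + 1) *
              Iab a b ε y₀ (fun y => f y / ((y : ℂ) + ε * y₀ / (Complex.I * a - ε)) ^ (κ + 2))
          + Iab a b ε y₀
              (fun y => derivWithin f (Set.Ici b) y /
                ((y : ℂ) + ε * y₀ / (Complex.I * a - ε)) ^ (κ + 1))) := by
  obtain ⟨hfC1, M, -, hM⟩ := hf
  have hf' : ∀ y ∈ Ici b, HasDerivWithinAt f (derivWithin f (Ici b) y) (Ici b) y :=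
    fun y hy => (hfC1.differentiableOn one_ne_zero y hy).hasDerivWithinAt
  have hM' : ∀ y ∈ Ici b, ‖derivWithin f (Ici b) y‖ ≤ M * y ^ α := by
    simpa only [iteratedDerivWithin_one] using hM
  obtain ⟨K, hK⟩ := exists_norm_le_mul_rpow_add_one hb hα hf' hM'
  obtain ⟨δ, hδ, hδd⟩ := exists_pos_le_norm_ofReal_add_chirpShift ha hb ε y₀
  have hfc : ContinuousOn f (Ici b) := hfC1.continuousOn
  have hf'c := hfC1.continuousOn_derivWithin (uniqueDiffOn_Ici b) le_rfl
  have hA := integrableOn_gaussChirp_mul_div_pow (a := a) (y₀ := y₀) hε hb.le (by linarith)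
    hδ hδd hfc hK κ
  have hB := integrableOn_gaussChirp_mul_div_pow (a := a) (y₀ := y₀) hε hb.le (by linarith)
    hδ hδd hf'c hM' (κ + 1)
  have hC := integrableOn_gaussChirp_mul_div_pow (a := a) (y₀ := y₀) hε hb.le (by linarith)
    hδ hδd hfc hK (κ + 2)
  have hlim := tendsto_gaussChirp_mul (a := a) (y₀ := y₀) hε <| (eventually_ge_atTop b).mono
    fun y hy => (norm_div_pow_le hδ (hK y hy) (hδd y hy) (κ + 1)).trans_eq (mul_div_right_comm ..)
  refine ⟨fun j hj => ?_, hB, ?_⟩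
  · obtain rfl | rfl : j = κ ∨ j = κ + 2 := by simpa using hj
    exacts [hA, hC]
  have hexp : Complex.exp (Complex.I * a * b ^ 2 - ε * ((b : ℂ) - y₀) ^ 2) =
      gaussChirp a ε y₀ b := by
    rw [gaussChirp, ← Complex.exp_add]; congr 1; ring
  rw [hexp, mul_div_assoc (gaussChirp a ε y₀ b)]
  exact integral_gaussChirp_mul_div_pow_eq ha κ hf'
    (fun y hy => norm_pos_iff.1 (hδ.trans_le (hδd y hy))) hA hB hC hlim
end
end

section
/- Let a∈ℝ\{0}, b>0, ε>0, y₀∈ℝ, m∈ℕ₀, n∈ℕ, and set y_ε := y + εy₀/(ia−ε), b_ε := b + εy₀/(ia−ε). Define coefficients C_{k,l}∈ℝ recursively by C_{k,0} := (−1/2)^{k+1} and C_{k,l+1} := Σ_{i=0}^k ((−1)^{i+k}(i+1+2l)/2^{k+1−i}) C_{i,l}. Then for every f∈C_α^n([b,∞)), α≥0, one has I_{a,b}^{ε,y₀}(f) = Σ_{k=0}^{n−1} Σ_{l=0}^m C_{k,l} e^{iab²−ε(b−y₀)²} f^{(k)}(b) / ((ia−ε)^{k+1+l} b_ε^{k+1+2l})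 + Σ_{l=0}^m (C_{n−1,l}/(ia−ε)^{n+l}) I_{a,b}^{ε,y₀}(f^{(n)}/y_ε^{n+2l}) − Σ_{k=0}^{n−1} ((k+1+2m) C_{k,m}/(ia−ε)^{k+1+m}) I_{a,b}^{ε,y₀}(f^{(k)}/y_ε^{k+2+2m}). -/
/-!
The phase `φ(y) = e^{iay² - ε(y-y₀)²}` satisfies `φ' = 2(ia-ε) y_ε φ`. Writing
`φ = φ' / (2(ia-ε) y_ε)` and integrating by parts, `J(k,l) := I(f^{(k)} / y_ε^{k+2l})` satisfies
`2(ia-ε) J(k,l) = -B(k,l) - J(k+1,l) + (k+1+2l) J(k,l+1)` with the boundary term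
`B(k,l) = e^{iab²-ε(b-y₀)²} f^{(k)}(b) / b_ε^{k+1+2l}`. The Gaussian factor makes all these
integrals converge and the boundary terms at infinity vanish, because the derivatives of
`f ∈ C_α^n` grow at most exponentially. The rest is algebra: unrolling the recurrence in `k` up
to `n` and then in `l` up to `m`, the coefficients produced by the unrolling satisfy exactly the
triangular recursion defining `C_{k,l}`.
-/

open Set Filter MeasureTheory Topology

noncomputable section

/-- The recursively defined coefficients `C_{k,l}`:
`C_{k,0} = (-1/2)^{k+1}` and `C_{k,l+1} = Σ_{i=0}^k ((-1)^{i+k}(i+1+2l)/2^{k+1-i})·C_{i,l}`. -/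
def Ccoef : ℕ → ℕ → ℝ
  | k, 0 => (-(1 : ℝ) / 2) ^ (k + 1)
  | k, l + 1 =>
      ∑ i ∈ Finset.range (k + 1),
        (-1 : ℝ) ^ (i + k) * ((i : ℝ) + 1 + 2 * l) / 2 ^ (k + 1 - i) * Ccoef i l
  termination_by k l => l

open Finset

section Recurrence

variable {V : Type*} [AddCommGroup V] [Module ℝ V]

theorem eq_sum_Ico_pow_smul_of_eq_smul_add {x y : ℕ → V} {t : ℝ} {n : ℕ}
    (h : ∀ k < n, x k = t • (y k + x (k + 1))) {k₀ : ℕ} (hk₀ : k₀ ≤ n) :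
    x k₀ = ∑ j ∈ Ico k₀ n, t ^ (j - k₀ + 1) • y j + t ^ (n - k₀) • x n := by
  induction hk₀ using Nat.decreasingInduction with
  | self => simp
  | of_succ k hk ih =>
    rw [h k hk, ih, sum_eq_sum_Ico_succ_bot hk, smul_add, smul_add, smul_sum, smul_smul,
      Nat.sub_self, zero_add, pow_one, show n - k = n - (k + 1) + 1 by omega, pow_succ', add_assoc]
    congr 2
    refine sum_congr rfl fun j hj => ?_
    rw [smul_smul, ← pow_succ', show j - k + 1 = j - (k + 1) + 1 + 1 by grind]

theorem Ccoef_zero (k : ℕ) : Ccoef k 0 = (-1 / 2) ^ (k + 1) := by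
  rw [Ccoef]

theorem Ccoef_succ (j m : ℕ) :
    Ccoef j (m + 1) =
      -∑ i ∈ range (j + 1), (((i : ℝ) + 1 + 2 * m) * Ccoef i m) * (-1 / 2) ^ (j - i + 1) := by
  rw [Ccoef, ← sum_neg_distrib]
  refine sum_congr rfl fun i hi => ?_
  obtain ⟨e, rfl⟩ := Nat.exists_eq_add_of_le (Nat.lt_succ_iff.mp (mem_range.mp hi))
  rw [show i + (i + e) = 2 * i + e by ring, show i + e + 1 - i = e + 1 by omega,
    show i + e - i + 1 = e + 1 by omega, pow_add, pow_mul, div_pow]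
  ring

theorem eq_Ccoef_expansion {J B : ℕ → ℕ → V} {n : ℕ} (hn : 0 < n)
    (hJ : ∀ k < n, ∀ l,
      J k l = (-1 / 2 : ℝ) • (B k l - ((k : ℝ) + 1 + 2 * l) • J k (l + 1) + J (k + 1) l))
    (m : ℕ) :
    J 0 0 = ∑ k ∈ range n, ∑ l ∈ range (m + 1), Ccoef k l • B k l
      + ∑ l ∈ range (m + 1), Ccoef (n - 1) l • J n l
      - ∑ k ∈ range n, (((k : ℝ) + 1 + 2 * m) * Ccoef k m) • J k (m + 1) := by
  induction m with
  | zero =>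
    rw [eq_sum_Ico_pow_smul_of_eq_smul_add (fun k hk => hJ k hk 0) (Nat.zero_le n)]
    simp only [zero_add, range_one, sum_singleton, Ccoef_zero, Nat.sub_add_cancel hn,
      Nat.sub_zero, Nat.Ico_zero_eq_range, smul_sub, sum_sub_distrib, smul_smul,
      CharP.cast_eq_zero, mul_zero, add_zero]
    simp only [mul_comm]
    abel
  | succ m ih =>
    set R : ℕ → V := fun j => B j (m + 1) - ((j : ℝ) + 1 + 2 * ↑(m + 1)) • J j (m + 1 + 1)
    have hexp : ∀ k < n, J k (m + 1) =
        ∑ j ∈ Ico k n, (-1 / 2 : ℝ) ^ (j - k + 1) • R j + (-1 / 2 : ℝ) ^ (n - k) • J n (m + 1) :=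
      fun k hk => eq_sum_Ico_pow_smul_of_eq_smul_add (fun k hk => hJ k hk (m + 1)) hk.le
    -- Exchanging the order of summation produces exactly the sums of `Ccoef_succ`.
    have hswap : ∑ k ∈ range n, (((k : ℝ) + 1 + 2 * m) * Ccoef k m) • J k (m + 1) =
        -∑ j ∈ range n, Ccoef j (m + 1) • R j - Ccoef (n - 1) (m + 1) • J n (m + 1) := by
      rw [sum_congr rfl fun k hk => by rw [hexp k (mem_range.mp hk)]]
      simp only [smul_add, smul_sum, smul_smul, sum_add_distrib, range_eq_Ico]
      rw [sum_Ico_Ico_comm]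
      simp only [← sum_smul, Ccoef_succ, Nat.sub_add_cancel hn, neg_smul, sum_neg_distrib,
        neg_neg, sub_neg_eq_add, range_eq_Ico]
      congr 2
      exact sum_congr rfl fun k hk => by rw [show n - 1 - k + 1 = n - k by grind]
    rw [ih, hswap, sum_range_succ _ (m + 1)]
    simp only [sum_range_succ (fun l => Ccoef _ l • _), sum_add_distrib, R, smul_sub,
      sum_sub_distrib, smul_smul]
    push_cast
    simp only [mul_comm]
    abel

theorem eq_Ccoef_expansion_of_two_mul_eq {c : ℂ} (hc : c ≠ 0) {J B : ℕ → ℕ → ℂ} {n : ℕ}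
    (hn : 0 < n)
    (hJ : ∀ k < n, ∀ l, 2 * c * J k l = -B k l - J (k + 1) l + ((k : ℂ) + 1 + 2 * l) * J k (l + 1))
    (m : ℕ) :
    J 0 0 = ∑ k ∈ range n, ∑ l ∈ range (m + 1), (Ccoef k l : ℂ) * B k l / c ^ (k + 1 + l)
      + ∑ l ∈ range (m + 1), (Ccoef (n - 1) l : ℂ) / c ^ (n + l) * J n l
      - ∑ k ∈ range n, ((k : ℂ) + 1 + 2 * m) * (Ccoef k m : ℂ) / c ^ (k + 1 + m) * J k (m + 1) := by
  -- Dividing `J k l` by `c ^ (k + l)` and `B k l` by `c ^ (k + 1 + l)` eliminates `c`.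
  have h := eq_Ccoef_expansion (J := fun k l => J k l / c ^ (k + l))
    (B := fun k l => B k l / c ^ (k + 1 + l)) hn (fun k hk l => ?_) m
  · simp only [Complex.real_smul, pow_zero, div_one, add_zero] at h
    rw [h]
    congr 1
    · congr 1
      · exact sum_congr rfl fun k _ => sum_congr rfl fun l _ => (mul_div_assoc _ _ _).symm
      · exact sum_congr rfl fun l _ => by ring
    · refine sum_congr rfl fun k _ => ?_
      rw [show k + (m + 1) = k + 1 + m by ring]
      push_cast
      ring
  · simp only [Complex.real_smul]
    rw [show k + (l + 1) = k + l + 1 by ring, show k + 1 + l = k + l + 1 by ring, pow_succ]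
    push_cast
    field_simp
    linear_combination hJ k hk l

end Recurrence

theorem rpow_le_exp_mul {α y : ℝ} (hα : 0 ≤ α) (hy : 0 < y) : y ^ α ≤ Real.exp (α * y) := by
  rw [Real.rpow_def_of_pos hy, mul_comm α]
  gcongr
  linarith [Real.log_le_sub_one_of_pos hy]

/-- Exponential rather than polynomial bounds: they pass from `g'` to `g` on any `Ici b`
(`ExpBoundedOn.of_hasDerivWithinAt`), and the Gaussian factor of the phase beats all of them. -/
def ExpBoundedOn (s : Set ℝ) (g : ℝ → ℂ) : Prop :=
  ∃ M β : ℝ, 0 ≤ β ∧ ∀ y ∈ s, ‖g y‖ ≤ M * Real.exp (β * y)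

theorem ExpBoundedOn.div {s : Set ℝ} {g u : ℝ → ℂ} {δ : ℝ} (hg : ExpBoundedOn s g) (hδ : 0 < δ)
    (hu : ∀ y ∈ s, δ ≤ ‖u y‖) : ExpBoundedOn s fun y => g y / u y := by
  obtain ⟨M, β, hβ, hM⟩ := hg
  refine ⟨M / δ, β, hβ, fun y hy => ?_⟩
  calc ‖g y / u y‖ ≤ ‖g y‖ / δ := by
        rw [norm_div]; exact div_le_div_of_nonneg_left (norm_nonneg _) hδ (hu y hy)
    _ ≤ M * Real.exp (β * y) / δ := by gcongr; exact hM y hy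
    _ = M / δ * Real.exp (β * y) := by ring

theorem ExpBoundedOn.of_hasDerivWithinAt {g g' : ℝ → ℂ} {b : ℝ}
    (hg : ∀ y ∈ Ici b, HasDerivWithinAt g (g' y) (Ici b) y) (hg' : ExpBoundedOn (Ici b) g') :
    ExpBoundedOn (Ici b) g := by
  obtain ⟨M, β, hβ, hM⟩ := hg'
  have hM₀ : 0 ≤ M :=
    nonneg_of_mul_nonneg_left ((norm_nonneg _).trans (hM b self_mem_Ici)) (Real.exp_pos _)
  refine ⟨(‖g b‖ + M * Real.exp (β * b)) * Real.exp (-(β + 1) * b), β + 1, by linarith,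
    fun y (hy : b ≤ y) => ?_⟩
  have hmvt : ‖g y - g b‖ ≤ M * Real.exp (β * y) * ‖y - b‖ :=
    (convex_Icc b y).norm_image_sub_le_of_norm_hasDerivWithin_le
      (fun x hx => (hg x hx.1).mono Icc_subset_Ici_self)
      (fun x hx => (hM x hx.1).trans (by gcongr; exact hx.2))
      (left_mem_Icc.2 hy) (right_mem_Icc.2 hy)
  rw [Real.norm_eq_abs, abs_of_nonneg (sub_nonneg.2 hy)] at hmvt
  calc ‖g y‖ ≤ ‖g b‖ + M * Real.exp (β * y) * (y - b) := by
        linarith [norm_sub_norm_le (g y) (g b)]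
    _ ≤ ‖g b‖ * Real.exp ((β + 1) * (y - b)) + M * Real.exp (β * y) * Real.exp (y - b) := by
        refine add_le_add ?_ ?_
        · exact le_mul_of_one_le_right (norm_nonneg _)
            (Real.one_le_exp (mul_nonneg (by linarith) (sub_nonneg.2 hy)))
        · gcongr
          linarith [Real.add_one_le_exp (y - b)]
    _ = _ := by
        simp only [add_mul, mul_assoc, ← Real.exp_add]
        ring_nf

section ChirpIntegral

open Complex

variable {a ε y₀ b : ℝ}

def chirpPhase (a ε y₀ y : ℝ) : ℂ := Complex.exp (I * a * y ^ 2 - ε * (y - y₀) ^ 2)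

theorem Iab_eq_integral_chirpPhase_mul (a b ε y₀ : ℝ) (g : ℝ → ℂ) :
    Iab a b ε y₀ g = ∫ y in Ioi b, chirpPhase a ε y₀ y * g y := by
  simp only [Iab, chirpPhase, ← Complex.exp_add, neg_mul, neg_add_eq_sub]

theorem hasDerivAt_chirpPhase (y : ℝ) :
    HasDerivAt (chirpPhase a ε y₀) (2 * ((I * a - ε) * y + ε * y₀) * chirpPhase a ε y₀ y) y := by
  have hq : HasDerivAt (fun z : ℂ => I * a * z ^ 2 - ε * (z - y₀) ^ 2)
      (2 * ((I * a - ε) * y + ε * y₀)) y := by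
    refine ((((hasDerivAt_id (y : ℂ)).pow 2).const_mul (I * a)).sub
      ((((hasDerivAt_id (y : ℂ)).sub_const (y₀ : ℂ)).pow 2).const_mul (ε : ℂ))).congr_deriv ?_
    simp only [id_eq]
    ring
  rw [mul_comm]
  exact hq.cexp.comp_ofReal

theorem I_mul_sub_ne_zero (ha : a ≠ 0) : I * a - ε ≠ 0 := by
  intro h
  simpa [ha] using congrArg im h

theorem abs_mul_le_norm_add_shift (hb : 0 < b) {y : ℝ} (hy : b ≤ y) :
    |a| * b / ‖I * a - ε‖ ≤ ‖(y : ℂ) + ε * y₀ / (I * a - ε)‖ := by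
  rcases eq_or_ne (I * a - ε) 0 with hc | hc
  · simp [hc]
  have hshift : (y : ℂ) + ε * y₀ / (I * a - ε) = ((I * a - ε) * y + ε * y₀) / (I * a - ε) := by
    field_simp
  have him : ((I * a - ε) * y + ε * y₀).im = a * y := by simp
  rw [hshift, norm_div]
  gcongr
  calc |a| * b ≤ |a * y| := by
        rw [abs_mul, abs_of_pos (hb.trans_le hy)]; gcongr
    _ ≤ _ := him ▸ abs_im_le_norm _

theorem add_shift_ne_zero (ha : a ≠ 0) (hb : 0 < b) {y : ℝ} (hy : b ≤ y) :
    (y : ℂ) + ε * y₀ / (I * a - ε) ≠ 0 := by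
  have hpos : 0 < |a| * b / ‖I * a - ε‖ := by
    have := I_mul_sub_ne_zero (ε := ε) ha
    positivity
  exact norm_pos_iff.mp (hpos.trans_le (abs_mul_le_norm_add_shift hb hy))

theorem continuous_chirpPhase : Continuous (chirpPhase a ε y₀) := by
  unfold chirpPhase
  fun_prop

theorem integrableOn_chirpPhase_mul (hε : 0 < ε) {g : ℝ → ℂ} (hgc : ContinuousOn g (Ici b))
    (hg : ExpBoundedOn (Ici b) g) :
    IntegrableOn (fun y => chirpPhase a ε y₀ y * g y) (Ioi b) := by
  obtain ⟨M, β, -, hM⟩ := hg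
  have hdom : Integrable fun y : ℝ => chirpPhase a ε y₀ y * Complex.exp (β * y) := by
    refine (integrable_cexp_quadratic (b := ε - I * a) (by simpa using hε) (2 * ε * y₀ + β)
      (-(ε * y₀ ^ 2))).congr (ae_of_all _ fun y => ?_)
    simp only [chirpPhase, ← Complex.exp_add]
    ring_nf
  refine Integrable.mono' (hdom.norm.const_mul M).integrableOn
    (((continuous_chirpPhase.continuousOn.mul hgc).mono Ioi_subset_Ici_self).aestronglyMeasurable
      measurableSet_Ioi) ?_
  filter_upwards [ae_restrict_mem measurableSet_Ioi] with y hy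
  rw [norm_mul, norm_mul, ← ofReal_mul, norm_exp_ofReal]
  calc ‖chirpPhase a ε y₀ y‖ * ‖g y‖ ≤ ‖chirpPhase a ε y₀ y‖ * (M * Real.exp (β * y)) := by
        gcongr; exact hM y (Ioi_subset_Ici_self hy)
    _ = M * (‖chirpPhase a ε y₀ y‖ * Real.exp (β * y)) := by ring

theorem continuousOn_div_pow_add_shift (ha : a ≠ 0) (hb : 0 < b) {g : ℝ → ℂ}
    (hgc : ContinuousOn g (Ici b)) (p : ℕ) :
    ContinuousOn (fun y : ℝ => g y / ((y : ℂ) + ε * y₀ / (I * a - ε)) ^ p) (Ici b) :=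
  hgc.div (by fun_prop) fun _ hy => pow_ne_zero _ (add_shift_ne_zero ha hb hy)

theorem integrableOn_chirpPhase_mul_div_pow_add_shift (ha : a ≠ 0) (hb : 0 < b) (hε : 0 < ε)
    {g : ℝ → ℂ} (hgc : ContinuousOn g (Ici b)) (hg : ExpBoundedOn (Ici b) g) (p : ℕ) :
    IntegrableOn
      (fun y => chirpPhase a ε y₀ y * (g y / ((y : ℂ) + ε * y₀ / (I * a - ε)) ^ p)) (Ioi b) := by
  have hδ : 0 < |a| * b / ‖I * a - ε‖ := by
    have := I_mul_sub_ne_zero (ε := ε) ha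
    positivity
  refine integrableOn_chirpPhase_mul hε (continuousOn_div_pow_add_shift ha hb hgc p)
    (hg.div (pow_pos hδ p) fun y hy => ?_)
  rw [norm_pow]
  exact pow_le_pow_left₀ hδ.le (abs_mul_le_norm_add_shift hb hy) p

theorem hasDerivAt_chirpPhase_mul_div_pow_add_shift (ha : a ≠ 0) {g : ℝ → ℂ} {g'y : ℂ} {y : ℝ}
    (hg : HasDerivAt g g'y y) (hy : (y : ℂ) + ε * y₀ / (I * a - ε) ≠ 0) (j : ℕ) :
    HasDerivAt (fun y => chirpPhase a ε y₀ y * (g y / ((y : ℂ) + ε * y₀ / (I * a - ε)) ^ (j + 1)))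
      (2 * (I * a - ε) * (chirpPhase a ε y₀ y * (g y / ((y : ℂ) + ε * y₀ / (I * a - ε)) ^ j))
        + chirpPhase a ε y₀ y * (g'y / ((y : ℂ) + ε * y₀ / (I * a - ε)) ^ (j + 1))
        - ((j : ℂ) + 1) *
          (chirpPhase a ε y₀ y * (g y / ((y : ℂ) + ε * y₀ / (I * a - ε)) ^ (j + 2)))) y := by
  set c : ℂ := I * a - ε
  set w : ℂ := ε * y₀ / c
  have hpow : HasDerivAt (fun y : ℝ => ((y : ℂ) + w) ^ (j + 1))
      (((j + 1 : ℕ) : ℂ) * ((y : ℂ) + w) ^ j) y := by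
    simpa using (((hasDerivAt_id (y : ℂ)).add_const w).pow (j + 1)).comp_ofReal
  have hcw : c * (y : ℂ) + ε * y₀ = c * ((y : ℂ) + w) := by
    rw [mul_add, mul_div_cancel₀ _ (I_mul_sub_ne_zero ha)]
  refine ((hasDerivAt_chirpPhase y).mul (hg.fun_div hpow (pow_ne_zero _ hy))).congr_deriv ?_
  rw [hcw]
  push_cast
  field_simp
  ring

theorem two_mul_Iab_div_pow_add_shift (ha : a ≠ 0) (hb : 0 < b) (hε : 0 < ε) {g g' : ℝ → ℂ}
    (hg : ∀ y ∈ Ici b, HasDerivWithinAt g (g' y) (Ici b) y) (hg'c : ContinuousOn g' (Ici b))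
    (hgb : ExpBoundedOn (Ici b) g) (hg'b : ExpBoundedOn (Ici b) g') (j : ℕ) :
    2 * (I * a - ε) * Iab a b ε y₀ (fun y => g y / ((y : ℂ) + ε * y₀ / (I * a - ε)) ^ j) =
      -(Complex.exp (I * a * b ^ 2 - ε * ((b : ℂ) - y₀) ^ 2) * g b /
          ((b : ℂ) + ε * y₀ / (I * a - ε)) ^ (j + 1))
      - Iab a b ε y₀ (fun y => g' y / ((y : ℂ) + ε * y₀ / (I * a - ε)) ^ (j + 1))
      + ((j : ℂ) + 1) *
        Iab a b ε y₀ (fun y => g y / ((y : ℂ) + ε * y₀ / (I * a - ε)) ^ (j + 2)) := by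
  have hgc : ContinuousOn g (Ici b) := fun y hy => (hg y hy).continuousWithinAt
  have hI₀ := integrableOn_chirpPhase_mul_div_pow_add_shift (y₀ := y₀) ha hb hε hgc hgb j
  have hI₁ := integrableOn_chirpPhase_mul_div_pow_add_shift (y₀ := y₀) ha hb hε hg'c hg'b (j + 1)
  have hI₂ := integrableOn_chirpPhase_mul_div_pow_add_shift (y₀ := y₀) ha hb hε hgc hgb (j + 2)
  have hderiv := fun y (hy : y ∈ Ioi b) =>
    hasDerivAt_chirpPhase_mul_div_pow_add_shift (ε := ε) (y₀ := y₀) ha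
      ((hg y (Ioi_subset_Ici_self hy)).hasDerivAt (Ici_mem_nhds hy))
      (add_shift_ne_zero ha hb (le_of_lt hy)) j
  have hI₀' := hI₀.const_mul (2 * (I * a - ε))
  have hI₂' := hI₂.const_mul ((j : ℂ) + 1)
  have hFTC := integral_Ioi_of_hasDerivAt_of_tendsto
    ((continuous_chirpPhase.continuousOn.mul (continuousOn_div_pow_add_shift ha hb hgc (j + 1)))
      b self_mem_Ici)
    hderiv ((hI₀'.add hI₁).sub hI₂')
    (tendsto_zero_of_hasDerivAt_of_integrableOn_Ioi hderiv ((hI₀'.add hI₁).sub hI₂')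
      (integrableOn_chirpPhase_mul_div_pow_add_shift ha hb hε hgc hgb (j + 1)))
  rw [integral_sub, integral_add hI₀' hI₁, integral_const_mul, integral_const_mul,
    Pi.mul_apply] at hFTC
  · have hEb : Complex.exp (I * a * b ^ 2 - ε * ((b : ℂ) - y₀) ^ 2) = chirpPhase a ε y₀ b := rfl
    simp only [Iab_eq_integral_chirpPhase_mul, hEb]
    linear_combination hFTC
  · exact hI₀'.add hI₁
  · exact hI₂'

end ChirpIntegral

section IteratedDerivatives

variable {a b ε y₀ α : ℝ} {n k : ℕ} {f : ℝ → ℂ}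

theorem hasDerivWithinAt_iteratedDerivWithin {E : Type*} [NormedAddCommGroup E] [NormedSpace ℝ E]
    {g : ℝ → E} {s : Set ℝ} (hg : ContDiffOn ℝ n g s) (hs : UniqueDiffOn ℝ s) (hk : k < n) {y : ℝ}
    (hy : y ∈ s) :
    HasDerivWithinAt (iteratedDerivWithin k g s) (iteratedDerivWithin (k + 1) g s y) s y := by
  rw [iteratedDerivWithin_succ]
  exact (hg.differentiableOn_iteratedDerivWithin (by exact_mod_cast hk) hs y hy).hasDerivWithinAt

theorem MemCnAlpha.expBoundedOn_iteratedDerivWithin (hf : MemCnAlpha b n α f) (hb : 0 < b)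
    (hα : 0 ≤ α) (hk : k ≤ n) : ExpBoundedOn (Ici b) (iteratedDerivWithin k f (Ici b)) := by
  induction hk using Nat.decreasingInduction with
  | self =>
    obtain ⟨-, M, hM₀, hM⟩ := hf
    exact ⟨M, α, hα, fun y hy =>
      (hM y hy).trans (by gcongr; exact rpow_le_exp_mul hα (hb.trans_le hy))⟩
  | of_succ k hk ih =>
    exact ExpBoundedOn.of_hasDerivWithinAt
      (fun y hy => hasDerivWithinAt_iteratedDerivWithin hf.1 (uniqueDiffOn_Ici b) hk hy) ih

open Complex in
theorem MemCnAlpha.two_mul_Iab_iteratedDerivWithin_div (hf : MemCnAlpha b n α f) (ha : a ≠ 0)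
    (hb : 0 < b) (hε : 0 < ε) (hα : 0 ≤ α) (hk : k < n) (l : ℕ) :
    2 * (I * a - ε) * Iab a b ε y₀ (fun y => iteratedDerivWithin k f (Ici b) y /
        ((y : ℂ) + ε * y₀ / (I * a - ε)) ^ (k + 2 * l)) =
      -(Complex.exp (I * a * b ^ 2 - ε * ((b : ℂ) - y₀) ^ 2) * iteratedDerivWithin k f (Ici b) b /
          ((b : ℂ) + ε * y₀ / (I * a - ε)) ^ (k + 1 + 2 * l))
      - Iab a b ε y₀ (fun y => iteratedDerivWithin (k + 1) f (Ici b) y /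
          ((y : ℂ) + ε * y₀ / (I * a - ε)) ^ (k + 1 + 2 * l))
      + ((k : ℂ) + 1 + 2 * l) * Iab a b ε y₀ (fun y => iteratedDerivWithin k f (Ici b) y /
          ((y : ℂ) + ε * y₀ / (I * a - ε)) ^ (k + 2 * (l + 1))) := by
  have h := two_mul_Iab_div_pow_add_shift (y₀ := y₀) ha hb hε
    (fun y hy => hasDerivWithinAt_iteratedDerivWithin hf.1 (uniqueDiffOn_Ici b) hk hy)
    (hf.1.continuousOn_iteratedDerivWithin (by exact_mod_cast hk) (uniqueDiffOn_Ici b))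
    (hf.expBoundedOn_iteratedDerivWithin hb hα hk.le)
    (hf.expBoundedOn_iteratedDerivWithin hb hα hk) (k + 2 * l)
  rw [show k + 2 * l + 1 = k + 1 + 2 * l by ring, show k + 2 * l + 2 = k + 2 * (l + 1) by ring] at h
  rw [h]
  push_cast
  ring

end IteratedDerivatives

/-- the iterated integration by parts formula for `I_{a,b}^{ε,y₀}(f)`. -/
theorem stmt11 (a : ℝ) (ha : a ≠ 0) (b : ℝ) (hb : 0 < b) (ε : ℝ) (hε : 0 < ε) (y₀ : ℝ)
    (m : ℕ) (n : ℕ) (hn : 0 < n) (α : ℝ) (hα : 0 ≤ α) (f : ℝ → ℂ) (hf : MemCnAlpha b n α f) :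
    Iab a b ε y₀ f =
      (∑ k ∈ Finset.range n, ∑ l ∈ Finset.range (m + 1),
        (Ccoef k l : ℂ) * Complex.exp (Complex.I * a * b ^ 2 - ε * ((b : ℂ) - y₀) ^ 2) *
            iteratedDerivWithin k f (Set.Ici b) b /
          ((Complex.I * a - ε) ^ (k + 1 + l) *
            ((b : ℂ) + ε * y₀ / (Complex.I * a - ε)) ^ (k + 1 + 2 * l)))
      + (∑ l ∈ Finset.range (m + 1),
          (Ccoef (n - 1) l : ℂ) / (Complex.I * a - ε) ^ (n + l) *
            Iab a b ε y₀ (fun y => iteratedDerivWithin n f (Set.Ici b) y /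
              ((y : ℂ) + ε * y₀ / (Complex.I * a - ε)) ^ (n + 2 * l)))
      - ∑ k ∈ Finset.range n,
          ((k : ℂ) + 1 + 2 * m) * (Ccoef k m : ℂ) / (Complex.I * a - ε) ^ (k + 1 + m) *
            Iab a b ε y₀ (fun y => iteratedDerivWithin k f (Set.Ici b) y /
              ((y : ℂ) + ε * y₀ / (Complex.I * a - ε)) ^ (k + 2 + 2 * m)) := by
  have h := eq_Ccoef_expansion_of_two_mul_eq (I_mul_sub_ne_zero (ε := ε) ha) hn
    (fun k hk l => hf.two_mul_Iab_iteratedDerivWithin_div (y₀ := y₀) ha hb hε hα hk l) m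
  simp only [iteratedDerivWithin_zero, add_zero, mul_zero, pow_zero, div_one] at h
  rw [h]
  congr 1
  · congr 1
    exact sum_congr rfl fun k _ => sum_congr rfl fun l _ => by
      rw [← mul_div_assoc, div_div, mul_comm (_ ^ (k + 1 + 2 * l)), ← mul_assoc]
  · exact sum_congr rfl fun k _ => by rw [show k + 2 * (m + 1) = k + 2 + 2 * m by ring]
end
end
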